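/- Exact solution of the recombination ODE: with ω_t := ∑_{G⊆L} a_G(t) R_G(ω₀) for a finite positive measure ω₀, the family ω_t satisfies d/dt ω_t = ∑_{α∈L} ρ_α (R_α(ω_t) − ω_t) with ω_0 = ω₀; moreover ω_t is a positive measure of the same total mass as ω₀ for all t ≥ 0. -/

import Mathlib

/-!
On positive measures the recombinators `R_α` are commuting idempotents: written in terms of the
marginals of `ν` on the blocks of sites cut out by two links, `R_α (R_β ν)` and `R_β (R_α ν)`
are both the normalised product of these marginals. So `R_G` may be applied in any order and
`R_α R_G = R_{G ∪ {α}}`.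

`a_G(t)` is the probability that, of independent exponential clocks of rates `ρ_α`, exactly
those with `α ∈ G` have rung by time `t`; hence
`d/dt ∑_G a_G(t) F(G) = ∑_α ρ_α ∑_G a_G(t) (F(G ∪ {α}) - F(G))`. With `F(G) = R_G ω₀` it
remains to show `R_α ω_t = ∑_G a_G(t) R_{G ∪ {α}} ω₀`. Now `R_α` only sees the marginals of
`ω_t` left and right of `α`; the marginal of `R_G ω₀` on one side depends only on the links of
`G` on that side, and the two sides of `G` are independent under `a_G(t)`.
-/

open Finset

namespace Recombination

variable {n : ℕ} (X : Fin (n + 1) → Type*) [∀ i, Fintype (X i)] [∀ i, DecidableEq (X i)]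

/-- (Signed) measures on the finite product space `X = X₀ × ⋯ × Xₙ`,
identified with their density functions. -/
abbrev Meas := (∀ i, X i) → ℝ

/-- Total variation norm of a measure. -/
noncomputable def tv (ω : Meas X) : ℝ := ∑ x, |ω x|

/-- Total mass of a measure. -/
noncomputable def mass (ω : Meas X) : ℝ := ∑ x, ω x

/-- Positivity of a measure. -/
def Pos (ω : Meas X) : Prop := ∀ x, 0 ≤ ω x

/-- Marginal (pushforward under the coordinate projection onto the sites
satisfying `p`) of a measure. -/
noncomputable def marg (p : Fin (n + 1) → Prop) [DecidablePred p] (ω : Meas X) :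
    (∀ i : {i // p i}, X i.1) → ℝ :=
  fun y => ∑ x : ∀ i, X i, if (∀ i : {i // p i}, x i.1 = y i) then ω x else 0

/-- Product measure of a measure on the leading block (sites satisfying `p`)
and a measure on the trailing block. -/
noncomputable def prodM (p : Fin (n + 1) → Prop) [DecidablePred p]
    (f : (∀ i : {i // p i}, X i.1) → ℝ) (g : (∀ i : {i // ¬ p i}, X i.1) → ℝ) :
    Meas X :=
  fun x => f (fun i => x i.1) * g (fun i => x i.1)

open Classical in
/-- The elementary recombinator at link `α` (the link between sites `α` and `α+1`):
`R_α(ω) = ((π_{<α}.ω) ⊗ (π_{>α}.ω))/‖ω‖` for `ω ≠ 0`, and `R_α(0) = 0`. -/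
noncomputable def R (α : Fin n) (ω : Meas X) : Meas X :=
  if ω = 0 then 0 else
    (tv X ω)⁻¹ • prodM X (fun i => i.val ≤ α.val)
      (marg X (fun i => i.val ≤ α.val) ω) (marg X (fun i => ¬ i.val ≤ α.val) ω)

/-- The composite recombinator `R_G = ∏_{α ∈ G} R_α`. -/
noncomputable def RG (G : Finset (Fin n)) (ω : Meas X) : Meas X :=
  (G.sort (· ≤ ·)).foldr (fun α ν => R X α ν) ω

/-- The coefficient functions `a_G(t)` of the single-crossover model. -/
noncomputable def coeffA (ρ : Fin n → ℝ) (G : Finset (Fin n)) (t : ℝ) : ℝ :=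
  (∏ α ∈ Gᶜ, Real.exp (-(ρ α * t))) * ∏ β ∈ G, (1 - Real.exp (-(ρ β * t)))

/-- The coefficient functions `b_K(t) = exp(−t ∑_{α∈L∖K} ρ_α)`. -/
noncomputable def coeffB (ρ : Fin n → ℝ) (K : Finset (Fin n)) (t : ℝ) : ℝ :=
  Real.exp (-(∑ α ∈ Kᶜ, ρ α) * t)

/-- The linkage-disequilibrium operators `T_G = ∑_{H ⊇ G} (−1)^{|H∖G|} R_H`. -/
noncomputable def T (G : Finset (Fin n)) (ω : Meas X) : Meas X :=
  ∑ H ∈ (Finset.univ : Finset (Fin n)).powerset.filter (fun H => G ⊆ H),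
    ((-1 : ℝ) ^ (H \ G).card) • RG X H ω

/-- The solution `ω_t = ∑_{G⊆L} a_G(t) R_G(ω₀)` of the recombination equation. -/
noncomputable def sol (ρ : Fin n → ℝ) (ω₀ : Meas X) (t : ℝ) : Meas X :=
  ∑ G ∈ (Finset.univ : Finset (Fin n)).powerset, coeffA ρ G t • RG X G ω₀

/-- The one-site marginal at site `i`. -/
noncomputable def marg1 (i : Fin (n + 1)) (ω : Meas X) (y : X i) : ℝ :=
  ∑ x : ∀ j, X j, if x i = y then ω x else 0

end Recombination

namespace Recombination

variable {n : ℕ} {X : Fin (n + 1) → Type*} [∀ i, Fintype (X i)]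

open Classical in
/-- The `p`-marginal of `ω` read at the restriction of `x` to `p` (see `marg_apply_restrict`),
kept as a function on the whole product space to avoid the subtype-indexed spaces of `marg`. -/
noncomputable def cyl (p : Fin (n + 1) → Prop) (ω : Meas X) (x : ∀ i, X i) : ℝ :=
  ∑ y, if ∀ i, p i → y i = x i then ω y else 0

lemma cyl_congr {p p' : Fin (n + 1) → Prop} (h : ∀ i, p i ↔ p' i) :
    cyl (X := X) p = cyl p' := by
  rw [funext fun i => propext (h i)]

lemma cyl_of_forall_not {p : Fin (n + 1) → Prop} (h : ∀ i, ¬ p i) (ω : Meas X)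
    (x : ∀ i, X i) : cyl p ω x = mass X ω := by
  simp [cyl, mass, h]

lemma cyl_zero (p : Fin (n + 1) → Prop) (x : ∀ i, X i) : cyl p (0 : Meas X) x = 0 := by
  simp [cyl]

lemma cyl_sum_smul {ι : Type*} (p : Fin (n + 1) → Prop) (s : Finset ι) (c : ι → ℝ)
    (ω : ι → Meas X) (x : ∀ i, X i) :
    cyl p (∑ k ∈ s, c k • ω k) x = ∑ k ∈ s, c k * cyl p (ω k) x := by
  simp only [cyl, Finset.sum_apply, Pi.smul_apply, smul_eq_mul, Finset.mul_sum]
  rw [Finset.sum_comm]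
  refine Finset.sum_congr rfl fun y _ => ?_
  split_ifs <;> simp

lemma cyl_smul (p : Fin (n + 1) → Prop) (c : ℝ) (ω : Meas X) (x : ∀ i, X i) :
    cyl p (c • ω) x = c * cyl p ω x := by
  simp only [cyl, Pi.smul_apply, smul_eq_mul, Finset.mul_sum, mul_ite, mul_zero]

lemma cyl_nonneg {ω : Meas X} (h : Pos X ω) (p : Fin (n + 1) → Prop) (x : ∀ i, X i) :
    0 ≤ cyl p ω x :=
  Finset.sum_nonneg fun y _ => by split_ifs <;> simp [h y]

lemma mass_smul (c : ℝ) (ω : Meas X) : mass X (c • ω) = c * mass X ω := by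
  simp [mass, Finset.mul_sum]

lemma mass_sum_smul {ι : Type*} (s : Finset ι) (c : ι → ℝ) (ω : ι → Meas X) :
    mass X (∑ k ∈ s, c k • ω k) = ∑ k ∈ s, c k * mass X (ω k) := by
  simp only [mass, Finset.sum_apply, Pi.smul_apply, smul_eq_mul, Finset.mul_sum]
  exact Finset.sum_comm

lemma tv_eq_mass {ω : Meas X} (h : Pos X ω) : tv X ω = mass X ω :=
  Finset.sum_congr rfl fun x _ => abs_of_nonneg (h x)

lemma eq_zero_of_mass_eq_zero {ω : Meas X} (h : Pos X ω) (hm : mass X ω = 0) : ω = 0 := by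
  funext x
  exact (Finset.sum_eq_zero_iff_of_nonneg fun y _ => h y).1 hm x (Finset.mem_univ x)

open Classical in
/-- The point of `X` with `q`-coordinates from `a` and the others from `b` is the only one lying
over `(a, b)`. -/
lemma sum_mul_cyl_mul_cyl (q : Fin (n + 1) → Prop) (μ ν : Meas X) (φ : (∀ i, X i) → ℝ) :
    ∑ y, φ y * (cyl q μ y * cyl (fun i => ¬ q i) ν y) =
      ∑ a, ∑ b, φ ({i | q i}.piecewise a b) * (μ a * ν b) := by
  have hfiber : ∀ a b y : ∀ i, X i, ((∀ i, q i → a i = y i) ∧ (∀ i, ¬ q i → b i = y i)) ↔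
      {i | q i}.piecewise a b = y := by
    intro a b y
    constructor
    · rintro ⟨ha, hb⟩
      funext i
      by_cases hi : q i <;> simp [Set.piecewise, hi, ha, hb]
    · rintro rfl
      exact ⟨fun i hi => by simp [Set.piecewise, hi], fun i hi => by simp [Set.piecewise, hi]⟩
  simp only [cyl]
  simp_rw [Finset.sum_mul_sum, Finset.mul_sum]
  rw [Finset.sum_comm]
  refine Finset.sum_congr rfl fun a _ => ?_
  rw [Finset.sum_comm]
  refine Finset.sum_congr rfl fun b _ => ?_
  trans ∑ y, if {i | q i}.piecewise a b = y then φ y * (μ a * ν b) else 0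
  · refine Finset.sum_congr rfl fun y _ => ?_
    simp only [← hfiber a b y]
    split_ifs <;> simp_all
  · simp

lemma sum_cyl_mul_cyl (q : Fin (n + 1) → Prop) (μ ν : Meas X) :
    ∑ y, cyl q μ y * cyl (fun i => ¬ q i) ν y = mass X μ * mass X ν := by
  simpa [mass, Finset.sum_mul_sum] using sum_mul_cyl_mul_cyl q μ ν (fun _ => 1)

open Classical in
lemma cyl_cyl_mul_cyl (p q : Fin (n + 1) → Prop) (μ ν : Meas X) (x : ∀ i, X i) :
    cyl p (fun y => cyl q μ y * cyl (fun i => ¬ q i) ν y) x =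
      cyl (fun i => p i ∧ q i) μ x * cyl (fun i => p i ∧ ¬ q i) ν x := by
  have hsplit : ∀ a b : ∀ i, X i, (∀ i, p i → {i | q i}.piecewise a b i = x i) ↔
      (∀ i, p i ∧ q i → a i = x i) ∧ (∀ i, p i ∧ ¬ q i → b i = x i) := by
    intro a b
    constructor
    · intro h
      exact ⟨fun i ⟨hp, hq⟩ => by simpa [Set.piecewise, hq] using h i hp,
        fun i ⟨hp, hq⟩ => by simpa [Set.piecewise, hq] using h i hp⟩
    · rintro ⟨ha, hb⟩ i hp
      by_cases hq : q i
      · simp [Set.piecewise, hq, ha i ⟨hp, hq⟩]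
      · simp [Set.piecewise, hq, hb i ⟨hp, hq⟩]
  have := sum_mul_cyl_mul_cyl q μ ν (fun y => if ∀ i, p i → y i = x i then 1 else 0)
  simp only [ite_mul, one_mul, zero_mul] at this
  rw [cyl, this, cyl, cyl, Finset.sum_mul_sum]
  refine Finset.sum_congr rfl fun a _ => Finset.sum_congr rfl fun b _ => ?_
  rw [if_congr (hsplit a b) rfl rfl, ite_and]
  split_ifs <;> simp

noncomputable def recomb (q : Fin (n + 1) → Prop) (ν : Meas X) : Meas X :=
  (tv X ν)⁻¹ • fun x => cyl q ν x * cyl (fun i => ¬ q i) ν x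

lemma recomb_apply (q : Fin (n + 1) → Prop) (ν : Meas X) (x : ∀ i, X i) :
    recomb q ν x = (tv X ν)⁻¹ * (cyl q ν x * cyl (fun i => ¬ q i) ν x) := rfl

lemma recomb_compl (q : Fin (n + 1) → Prop) (ν : Meas X) :
    recomb (fun i => ¬ q i) ν = recomb q ν := by
  funext x
  simp only [recomb_apply, not_not, mul_comm (cyl (fun i => ¬ q i) ν x)]

lemma cyl_recomb (p q : Fin (n + 1) → Prop) (ν : Meas X) (x : ∀ i, X i) :
    cyl p (recomb q ν) x =
      (tv X ν)⁻¹ * (cyl (fun i => p i ∧ q i) ν x * cyl (fun i => p i ∧ ¬ q i) ν x) := by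
  rw [recomb, cyl_smul, cyl_cyl_mul_cyl]

lemma pos_recomb (q : Fin (n + 1) → Prop) {ν : Meas X} (h : Pos X ν) : Pos X (recomb q ν) :=
  fun x => mul_nonneg (inv_nonneg.2 (Finset.sum_nonneg fun y _ => abs_nonneg (ν y)))
    (mul_nonneg (cyl_nonneg h _ x) (cyl_nonneg h _ x))

lemma mass_recomb (q : Fin (n + 1) → Prop) {ν : Meas X} (h : Pos X ν) :
    mass X (recomb q ν) = mass X ν := by
  rw [recomb, mass_smul, mass, sum_cyl_mul_cyl, tv_eq_mass h]
  rcases eq_or_ne (mass X ν) 0 with h0 | h0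
  · simp [h0]
  · field_simp

lemma tv_recomb (q : Fin (n + 1) → Prop) {ν : Meas X} (h : Pos X ν) :
    tv X (recomb q ν) = tv X ν := by
  rw [tv_eq_mass (pos_recomb q h), tv_eq_mass h, mass_recomb q h]

lemma cyl_recomb_of_imp {p q : Fin (n + 1) → Prop} (hpq : ∀ i, p i → q i) {ν : Meas X}
    (h : Pos X ν) : cyl p (recomb q ν) = cyl p ν := by
  funext x
  rw [cyl_recomb, cyl_congr fun i => and_iff_left_of_imp (hpq i),
    cyl_of_forall_not (p := fun i => p i ∧ ¬ q i) fun i hi => hi.2 (hpq i hi.1),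
    tv_eq_mass h]
  rcases eq_or_ne (mass X ν) 0 with h0 | h0
  · obtain rfl := eq_zero_of_mass_eq_zero h h0
    simp [cyl_zero, mass]
  · field_simp

lemma cyl_recomb_of_imp_not {p q : Fin (n + 1) → Prop} (hpq : ∀ i, p i → ¬ q i)
    {ν : Meas X} (h : Pos X ν) : cyl p (recomb q ν) = cyl p ν := by
  rw [← recomb_compl, cyl_recomb_of_imp hpq h]

lemma recomb_idem (q : Fin (n + 1) → Prop) {ν : Meas X} (h : Pos X ν) :
    recomb q (recomb q ν) = recomb q ν := by
  conv_lhs => rw [recomb, tv_recomb q h, cyl_recomb_of_imp (fun _ => id) h,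
    cyl_recomb_of_imp_not (fun _ => id) h]
  rfl

lemma recomb_comm (p q : Fin (n + 1) → Prop) {ν : Meas X} (h : Pos X ν) :
    recomb p (recomb q ν) = recomb q (recomb p ν) := by
  funext x
  simp only [recomb_apply, cyl_recomb, tv_recomb _ h, and_comm]
  ring

def leftOf (α : Fin n) (i : Fin (n + 1)) : Prop := i.val ≤ α.val

section Recombinators

variable [∀ i, DecidableEq (X i)]

lemma marg_apply_restrict (p : Fin (n + 1) → Prop) [DecidablePred p] (ω : Meas X)
    (x : ∀ i, X i) : marg X p ω (fun i => x i.1) = cyl p ω x :=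
  Finset.sum_congr rfl fun _ _ => by simp only [Subtype.forall]; congr

lemma R_eq_recomb (α : Fin n) : R X α = recomb (leftOf α) := by
  funext ν x
  rw [R]
  split_ifs with hν
  · simp [hν, recomb_apply, tv]
  · simp only [Pi.smul_apply, prodM, marg_apply_restrict, smul_eq_mul]
    rfl

lemma pos_foldr_R (l : List (Fin n)) {ν : Meas X} (h : Pos X ν) :
    Pos X (l.foldr (fun α ν => R X α ν) ν) := by
  induction l with
  | nil => exact h
  | cons α l ih => simpa only [List.foldr_cons, R_eq_recomb] using pos_recomb _ ih

lemma mass_foldr_R (l : List (Fin n)) {ν : Meas X} (h : Pos X ν) :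
    mass X (l.foldr (fun α ν => R X α ν) ν) = mass X ν := by
  induction l with
  | nil => rfl
  | cons α l ih => rw [List.foldr_cons, R_eq_recomb, mass_recomb _ (pos_foldr_R l h), ih]

lemma foldr_R_perm {l l' : List (Fin n)} (hl : l.Perm l') {ν : Meas X} (h : Pos X ν) :
    l.foldr (fun α ν => R X α ν) ν = l'.foldr (fun α ν => R X α ν) ν := by
  induction hl with
  | nil => rfl
  | cons α _ ih => rw [List.foldr_cons, List.foldr_cons, ih]
  | swap α β l =>
    simp only [List.foldr_cons, R_eq_recomb]
    rw [recomb_comm _ _ (by simpa only [R_eq_recomb] using pos_foldr_R l h)]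
  | trans _ _ ih₁ ih₂ => exact ih₁.trans ih₂

lemma pos_RG (G : Finset (Fin n)) {ν : Meas X} (h : Pos X ν) : Pos X (RG X G ν) :=
  pos_foldr_R _ h

lemma mass_RG (G : Finset (Fin n)) {ν : Meas X} (h : Pos X ν) :
    mass X (RG X G ν) = mass X ν :=
  mass_foldr_R _ h

lemma RG_empty (ν : Meas X) : RG X ∅ ν = ν := by
  rw [RG, Finset.sort_empty, List.foldr_nil]

lemma RG_insert_of_notMem {α : Fin n} {G : Finset (Fin n)} (hα : α ∉ G) {ν : Meas X}
    (h : Pos X ν) : RG X (insert α G) ν = R X α (RG X G ν) := by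
  unfold RG
  rw [foldr_R_perm (l' := α :: G.sort (· ≤ ·)) (Multiset.coe_eq_coe.1 ?_) h]
  · rfl
  rw [← Multiset.cons_coe, Finset.sort_eq, Finset.sort_eq, Finset.insert_val_of_notMem hα]

lemma RG_insert (α : Fin n) (G : Finset (Fin n)) {ν : Meas X} (h : Pos X ν) :
    RG X (insert α G) ν = R X α (RG X G ν) := by
  by_cases hα : α ∈ G
  · rw [Finset.insert_eq_of_mem hα, ← Finset.insert_erase hα,
      RG_insert_of_notMem (Finset.notMem_erase α G) h, R_eq_recomb,
      recomb_idem _ (pos_RG _ h)]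
  · exact RG_insert_of_notMem hα h

lemma cyl_RG_union {p : Fin (n + 1) → Prop} {T : Finset (Fin n)}
    (hT : ∀ β ∈ T, (∀ i, p i → leftOf β i) ∨ ∀ i, p i → ¬ leftOf β i)
    (S : Finset (Fin n)) {ν : Meas X} (h : Pos X ν) :
    cyl p (RG X (T ∪ S) ν) = cyl p (RG X S ν) := by
  induction T using Finset.induction_on with
  | empty => rw [Finset.empty_union]
  | insert β T _ ih =>
    rw [Finset.insert_union, RG_insert _ _ h, R_eq_recomb,
      ← ih fun γ hγ => hT γ (Finset.mem_insert_of_mem hγ)]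
    rcases hT β (Finset.mem_insert_self β T) with hp | hp
    · exact cyl_recomb_of_imp hp (pos_RG _ h)
    · exact cyl_recomb_of_imp_not hp (pos_RG _ h)

lemma cyl_leftOf_RG_union (α : Fin n) (S : Finset (Fin n)) {T : Finset (Fin n)}
    (hT : T ⊆ (Iic α)ᶜ) {ν : Meas X} (h : Pos X ν) :
    cyl (leftOf α) (RG X (S ∪ T) ν) = cyl (leftOf α) (RG X S ν) := by
  rw [Finset.union_comm]
  exact cyl_RG_union (fun β hβ => Or.inl fun _ hi => Nat.le_trans hi
    (not_le.1 fun hβα => Finset.mem_compl.1 (hT hβ) (Finset.mem_Iic.2 hβα)).le) S h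

lemma cyl_not_leftOf_RG_union (α : Fin n) {S : Finset (Fin n)} (hS : S ⊆ Iic α)
    (T : Finset (Fin n)) {ν : Meas X} (h : Pos X ν) :
    cyl (fun i => ¬ leftOf α i) (RG X (S ∪ T) ν) = cyl (fun i => ¬ leftOf α i) (RG X T ν) :=
  cyl_RG_union (fun _ hβ => Or.inr fun _ hi hiβ =>
    hi (Nat.le_trans hiβ (Fin.le_def.1 (Finset.mem_Iic.1 (hS hβ))))) T h

end Recombinators

section SubsetWeights

variable {ι : Type*} [DecidableEq ι]

/-- The probability that a random subset of `s`, containing each `i ∈ s` independently with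
probability `1 - p i`, equals `G`. -/
def subsetWeight (s : Finset ι) (p : ι → ℝ) (G : Finset ι) : ℝ :=
  (∏ i ∈ s \ G, p i) * ∏ i ∈ G, (1 - p i)

lemma sum_subsetWeight (s : Finset ι) (p : ι → ℝ) :
    ∑ G ∈ s.powerset, subsetWeight s p G = 1 := by
  simp_rw [subsetWeight, mul_comm (∏ i ∈ s \ _, p i)]
  rw [← Finset.prod_add]
  exact Finset.prod_eq_one fun i _ => sub_add_cancel 1 (p i)

lemma subsetWeight_nonneg (s : Finset ι) {p : ι → ℝ} (hp₀ : ∀ i, 0 ≤ p i) (hp₁ : ∀ i, p i ≤ 1)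
    (G : Finset ι) : 0 ≤ subsetWeight s p G :=
  mul_nonneg (Finset.prod_nonneg fun i _ => hp₀ i)
    (Finset.prod_nonneg fun i _ => sub_nonneg.2 (hp₁ i))

lemma subsetWeight_union {s t S T : Finset ι} (hst : Disjoint s t) (hS : S ⊆ s) (hT : T ⊆ t)
    (p : ι → ℝ) : subsetWeight (s ∪ t) p (S ∪ T) = subsetWeight s p S * subsetWeight t p T := by
  have hsdiff : (s ∪ t) \ (S ∪ T) = (s \ S) ∪ (t \ T) := by
    ext i
    simp only [Finset.mem_sdiff, Finset.mem_union, not_or]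
    have := Finset.disjoint_left.1 hst
    constructor
    · rintro ⟨his | hit, hiS, hiT⟩
      · exact Or.inl ⟨his, hiS⟩
      · exact Or.inr ⟨hit, hiT⟩
    · rintro (⟨his, hiS⟩ | ⟨hit, hiT⟩)
      · exact ⟨Or.inl his, hiS, fun h => this his (hT h)⟩
      · exact ⟨Or.inr hit, fun h => this (hS h) hit, hiT⟩
  rw [subsetWeight, hsdiff,
    Finset.prod_union (hst.mono Finset.sdiff_subset Finset.sdiff_subset),
    Finset.prod_union (hst.mono hS hT), subsetWeight, subsetWeight]
  ring

lemma sum_powerset_union {M : Type*} [AddCommMonoid M] {s t : Finset ι} (hst : Disjoint s t)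
    (f : Finset ι → M) :
    ∑ G ∈ (s ∪ t).powerset, f G = ∑ S ∈ s.powerset, ∑ T ∈ t.powerset, f (S ∪ T) := by
  induction s using Finset.induction_on generalizing f with
  | empty => simp
  | insert a s ha ih =>
    have hst' := Finset.disjoint_insert_left.1 hst
    rw [Finset.insert_union, Finset.sum_powerset_insert (by simp [ha, hst'.1]),
      Finset.sum_powerset_insert ha, ih hst'.2, ih hst'.2]
    simp only [Finset.insert_union]

lemma sum_subsetWeight_mul_mul {s t : Finset ι} (hst : Disjoint s t) (p : ι → ℝ)
    {u v : Finset ι → ℝ} (hu : ∀ S ⊆ s, ∀ T ⊆ t, u (S ∪ T) = u S)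
    (hv : ∀ S ⊆ s, ∀ T ⊆ t, v (S ∪ T) = v T) :
    ∑ G ∈ (s ∪ t).powerset, subsetWeight (s ∪ t) p G * (u G * v G) =
      (∑ G ∈ (s ∪ t).powerset, subsetWeight (s ∪ t) p G * u G) *
        ∑ G ∈ (s ∪ t).powerset, subsetWeight (s ∪ t) p G * v G := by
  simp only [sum_powerset_union hst]
  have hw : ∀ S ∈ s.powerset, ∀ T ∈ t.powerset,
      subsetWeight (s ∪ t) p (S ∪ T) = subsetWeight s p S * subsetWeight t p T :=
    fun S hS T hT => subsetWeight_union hst (Finset.mem_powerset.1 hS) (Finset.mem_powerset.1 hT) p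
  calc _ = ∑ S ∈ s.powerset, ∑ T ∈ t.powerset,
        (subsetWeight s p S * u S) * (subsetWeight t p T * v T) :=
        Finset.sum_congr rfl fun S hS => Finset.sum_congr rfl fun T hT => by
          rw [hw S hS T hT, hu S (Finset.mem_powerset.1 hS) T (Finset.mem_powerset.1 hT),
            hv S (Finset.mem_powerset.1 hS) T (Finset.mem_powerset.1 hT)]
          ring
    _ = (∑ S ∈ s.powerset, subsetWeight s p S * u S) *
          ∑ T ∈ t.powerset, subsetWeight t p T * v T := (Finset.sum_mul_sum _ _ _ _).symm
    _ = _ := by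
      congr 1
      · refine Finset.sum_congr rfl fun S hS => ?_
        rw [← mul_one (subsetWeight s p S * u S), ← sum_subsetWeight t p, Finset.mul_sum]
        refine Finset.sum_congr rfl fun T hT => ?_
        rw [hw S hS T hT, hu S (Finset.mem_powerset.1 hS) T (Finset.mem_powerset.1 hT)]
        ring
      · rw [← one_mul (∑ T ∈ t.powerset, subsetWeight t p T * v T), ← sum_subsetWeight s p,
          Finset.sum_mul_sum]
        refine Finset.sum_congr rfl fun S hS => Finset.sum_congr rfl fun T hT => ?_
        rw [hw S hS T hT, hv S (Finset.mem_powerset.1 hS) T (Finset.mem_powerset.1 hT)]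
        ring

end SubsetWeights

lemma coeffA_eq_subsetWeight (ρ : Fin n → ℝ) (G : Finset (Fin n)) (t : ℝ) :
    coeffA ρ G t = subsetWeight univ (fun α => Real.exp (-(ρ α * t))) G := by
  rw [coeffA, subsetWeight, Finset.compl_eq_univ_sdiff]

lemma sum_coeffA (ρ : Fin n → ℝ) (t : ℝ) : ∑ G ∈ univ.powerset, coeffA ρ G t = 1 := by
  simp only [coeffA_eq_subsetWeight, sum_subsetWeight]

lemma coeffA_nonneg {ρ : Fin n → ℝ} (hρ : ∀ α, 0 ≤ ρ α) (G : Finset (Fin n)) {t : ℝ}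
    (ht : 0 ≤ t) : 0 ≤ coeffA ρ G t := by
  rw [coeffA_eq_subsetWeight]
  exact subsetWeight_nonneg _ (fun α => (Real.exp_pos _).le)
    (fun α => Real.exp_le_one_iff.2 (neg_nonpos.2 (mul_nonneg (hρ α) ht))) G

lemma coeffA_eq_prod (ρ : Fin n → ℝ) (G : Finset (Fin n)) (t : ℝ) :
    coeffA ρ G t =
      ∏ β, if β ∈ G then 1 - Real.exp (-(ρ β * t)) else Real.exp (-(ρ β * t)) := by
  rw [coeffA, ← Finset.prod_mul_prod_compl G, mul_comm]
  congr 1 <;> refine Finset.prod_congr rfl fun β hβ => ?_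
  · rw [if_pos hβ]
  · rw [if_neg (Finset.mem_compl.1 hβ)]

lemma hasDerivAt_coeffA (ρ : Fin n → ℝ) (G : Finset (Fin n)) (t : ℝ) :
    HasDerivAt (coeffA ρ G)
      (∑ β, ρ β * if β ∈ G then coeffA ρ (G.erase β) t else -coeffA ρ G t) t := by
  set e : Fin n → ℝ → ℝ := fun β s => Real.exp (-(ρ β * s))
  set f : Finset (Fin n) → Fin n → ℝ → ℝ := fun H β s => if β ∈ H then 1 - e β s else e β s
  have he : ∀ β, HasDerivAt (e β) (-(ρ β * e β t)) t := fun β => by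
    simpa [e, mul_comm] using (((hasDerivAt_id t).const_mul (ρ β)).neg).exp
  have hf : ∀ β, HasDerivAt (f G β) (if β ∈ G then ρ β * e β t else -(ρ β * e β t)) t := by
    intro β
    by_cases hβ : β ∈ G
    · simpa [f, hβ] using (he β).const_sub 1
    · simpa [f, hβ] using he β
  have hsplit : ∀ H β, coeffA ρ H t = f H β t * ∏ γ ∈ univ.erase β, f H γ t := fun H β => by
    rw [coeffA_eq_prod, ← Finset.mul_prod_erase _ _ (Finset.mem_univ β)]
  have hprod : coeffA ρ G = fun s => ∏ β, f G β s := funext (coeffA_eq_prod ρ G)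
  have hderiv := HasDerivAt.fun_finsetProd (u := univ) fun β _ => hf β
  rw [← hprod] at hderiv
  refine hderiv.congr_deriv (Finset.sum_congr rfl fun β _ => ?_)
  by_cases hβ : β ∈ G
  · have herase : ∏ γ ∈ univ.erase β, f (G.erase β) γ t = ∏ γ ∈ univ.erase β, f G γ t :=
      Finset.prod_congr rfl fun γ hγ => by simp [f, (Finset.mem_erase.1 hγ).1]
    rw [hsplit (G.erase β) β, herase, if_pos hβ, if_pos hβ, smul_eq_mul]
    simp only [f, Finset.notMem_erase, if_false]
    ring
  · rw [hsplit G β, if_neg hβ, if_neg hβ, smul_eq_mul]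
    simp only [f, hβ, if_false]
    ring

lemma sum_coeffA_smul_insert_sub {E : Type*} [AddCommGroup E] [Module ℝ E] (ρ : Fin n → ℝ)
    (t : ℝ) (β : Fin n) (F : Finset (Fin n) → E) :
    ∑ G ∈ univ.powerset, coeffA ρ G t • (F (insert β G) - F G) =
      ∑ G ∈ univ.powerset, (if β ∈ G then coeffA ρ (G.erase β) t else -coeffA ρ G t) • F G := by
  have hβ : β ∉ univ.erase β := Finset.notMem_erase β univ
  have hG : ∀ G ∈ (univ.erase β).powerset, β ∉ G :=
    fun G hG h => hβ (Finset.mem_powerset.1 hG h)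
  rw [← Finset.insert_erase (Finset.mem_univ β), Finset.sum_powerset_insert hβ,
    Finset.sum_powerset_insert hβ]
  simp only [Finset.insert_idem, sub_self, smul_zero, Finset.sum_const_zero, add_zero,
    Finset.mem_insert_self, if_true]
  rw [← Finset.sum_add_distrib]
  refine Finset.sum_congr rfl fun G hGs => ?_
  rw [if_neg (hG G hGs), Finset.erase_insert (hG G hGs), smul_sub, neg_smul]
  abel

lemma hasDerivAt_sum_coeffA_smul {E : Type*} [NormedAddCommGroup E] [NormedSpace ℝ E]
    (ρ : Fin n → ℝ) (F : Finset (Fin n) → E) (t : ℝ) :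
    HasDerivAt (fun s => ∑ G ∈ univ.powerset, coeffA ρ G s • F G)
      (∑ β, ρ β • ∑ G ∈ univ.powerset, coeffA ρ G t • (F (insert β G) - F G)) t := by
  convert HasDerivAt.fun_sum fun G _ => (hasDerivAt_coeffA ρ G t).smul_const (F G) using 1
  simp only [sum_coeffA_smul_insert_sub, Finset.smul_sum, Finset.sum_smul, smul_smul]
  exact Finset.sum_comm

section Solution

variable [∀ i, DecidableEq (X i)]

lemma sol_time_zero (ρ : Fin n → ℝ) (ω₀ : Meas X) : sol X ρ ω₀ 0 = ω₀ := by
  rw [sol, Finset.sum_eq_single_of_mem ∅ (Finset.empty_mem_powerset _)]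
  · simp [coeffA, RG_empty]
  · intro G _ hG
    simp [coeffA, hG]

lemma pos_sol {ρ : Fin n → ℝ} (hρ : ∀ α, 0 ≤ ρ α) {ω₀ : Meas X} (h₀ : Pos X ω₀) {t : ℝ}
    (ht : 0 ≤ t) : Pos X (sol X ρ ω₀ t) := fun x => by
  rw [sol, Finset.sum_apply]
  exact Finset.sum_nonneg fun G _ => mul_nonneg (coeffA_nonneg hρ G ht) (pos_RG G h₀ x)

lemma mass_sol (ρ : Fin n → ℝ) {ω₀ : Meas X} (h₀ : Pos X ω₀) (t : ℝ) :
    mass X (sol X ρ ω₀ t) = mass X ω₀ := by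
  simp only [sol, mass_sum_smul, mass_RG _ h₀, ← Finset.sum_mul, sum_coeffA, one_mul]

lemma R_sol {ρ : Fin n → ℝ} (hρ : ∀ α, 0 ≤ ρ α) {ω₀ : Meas X} (h₀ : Pos X ω₀) {t : ℝ}
    (ht : 0 ≤ t) (α : Fin n) :
    R X α (sol X ρ ω₀ t) = ∑ G ∈ univ.powerset, coeffA ρ G t • RG X (insert α G) ω₀ := by
  funext x
  have hindep := sum_subsetWeight_mul_mul disjoint_compl_right
    (fun α => Real.exp (-(ρ α * t))) (u := fun G => cyl (leftOf α) (RG X G ω₀) x)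
    (v := fun G => cyl (fun i => ¬ leftOf α i) (RG X G ω₀) x)
    (fun S _ T hT => congrFun (cyl_leftOf_RG_union α S hT h₀) x)
    (fun S hS T _ => congrFun (cyl_not_leftOf_RG_union α hS T h₀) x)
  rw [Finset.union_compl] at hindep
  simp only [← coeffA_eq_subsetWeight] at hindep
  rw [R_eq_recomb, recomb_apply, tv_eq_mass (pos_sol hρ h₀ ht), mass_sol ρ h₀, sol,
    cyl_sum_smul, cyl_sum_smul, ← hindep, Finset.sum_apply, Finset.mul_sum]
  refine Finset.sum_congr rfl fun G _ => ?_
  rw [Pi.smul_apply, smul_eq_mul, RG_insert α G h₀, R_eq_recomb, recomb_apply,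
    tv_eq_mass (pos_RG G h₀), mass_RG G h₀]
  ring

end Solution

variable (X) [∀ i, DecidableEq (X i)]

/-- exact solution of the recombination ODE: with
`ω_t := ∑_{G⊆L} a_G(t) R_G(ω₀)` for a finite positive measure `ω₀`, one has
`ω_0 = ω₀` and `d/dt ω_t = ∑_{α∈L} ρ_α (R_α(ω_t) − ω_t)`; moreover `ω_t` is a
positive measure of the same total mass as `ω₀` for all `t ≥ 0`. -/
theorem sol_solves_recombination_ode (ρ : Fin n → ℝ) (hρ : ∀ α, 0 < ρ α)
    (ω₀ : Meas X) (h₀ : Pos X ω₀) :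
    sol X ρ ω₀ 0 = ω₀ ∧
    ∀ t : ℝ, 0 ≤ t →
      HasDerivAt (fun s => sol X ρ ω₀ s)
        (∑ α : Fin n, ρ α • (R X α (sol X ρ ω₀ t) - sol X ρ ω₀ t)) t ∧
      Pos X (sol X ρ ω₀ t) ∧ mass X (sol X ρ ω₀ t) = mass X ω₀ := by
  have hρ' : ∀ α, 0 ≤ ρ α := fun α => (hρ α).le
  refine ⟨sol_time_zero ρ ω₀, fun t ht => ⟨?_, pos_sol hρ' h₀ ht, mass_sol ρ h₀ t⟩⟩
  have hR : ∀ α, R X α (sol X ρ ω₀ t) - sol X ρ ω₀ t =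
      ∑ G ∈ univ.powerset, coeffA ρ G t • (RG X (insert α G) ω₀ - RG X G ω₀) := fun α => by
    rw [R_sol hρ' h₀ ht, sol, ← Finset.sum_sub_distrib]
    simp only [smul_sub]
  simp only [hR]
  exact hasDerivAt_sum_coeffA_smul ρ (fun G => RG X G ω₀) t

end Recombination
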